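/- Let P and Q be polytopes in ℝ^n of the same dimension k ≥ 1 with the same affine hull A, and suppose F := P ∩ Q is a face of both P and Q and has dimension k − 1. Then P and Q lie in opposite closed halfspaces of A bounded by the affine hull of F: there exists a nonzero vector η in the direction space of A, orthogonal to the direction space of the affine hull of F, such that ⟨η, x − p⟩ ≥ 0 for all x ∈ P and ⟨η, y − p⟩ ≤ 0 for all y ∈ Q, where p is any point of F. -/

import Mathlib

open Set
open scoped InnerProductSpace

noncomputable section

abbrev Euc (n : ℕ) : Type := EuclideanSpace ℝ (Fin n)

/-- A polytope is the convex hull of a finite set of points. -/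
def IsPolytope {n : ℕ} (P : Set (Euc n)) : Prop :=
  ∃ s : Finset (Euc n), P = convexHull ℝ (s : Set (Euc n))

/-- A face of a polytope: the intersection of `P` with a supporting hyperplane. -/
def IsFaceOf {n : ℕ} (F P : Set (Euc n)) : Prop :=
  ∃ (f : Euc n →ₗ[ℝ] ℝ) (c : ℝ), (∀ x ∈ P, f x ≤ c) ∧ F = {x ∈ P | f x = c}

/-- The dimension of a polytope: the dimension of its affine hull. -/
def polyDim {n : ℕ} (P : Set (Euc n)) : ℕ :=
  Module.finrank ℝ ↥(vectorSpan ℝ P)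

/-!
Let `F = P ∩ Q = {x ∈ P | f x = c}` with `f ≤ c` on `P`, and let `η` represent `-f` on the
common direction space `V` of `P` and `Q`. Everything reduces to showing `f ≥ c` on `Q`.
Since `W = vectorSpan F` has codimension one in `V` and `f` vanishes on `W` but not on `V`,
`W = V ∩ ker f`. If some `y ∈ Q` had `f y < c`, pick `x₀ ∈ P` with `f x₀ < c` and `p` in the
relative interior of `F`: then `y - p` is a positive multiple of `x₀ - p` modulo `W`, and moving
`p` slightly inside `F` lets the segment from it to `y` meet the segment from `p` to `x₀`. That
point lies in `P ∩ Q = F`, yet `f < c` there.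
-/

open Filter Topology Module

theorem Submodule.inf_ker_eq_of_finrank_succ {K V : Type*} [Field K] [AddCommGroup V]
    [Module K V] {W U : Submodule K V} [FiniteDimensional K U] {f : V →ₗ[K] K}
    (hWU : W ≤ U) (hrank : finrank K W + 1 = finrank K U)
    (hfW : W ≤ LinearMap.ker f) (hfU : ¬ U ≤ LinearMap.ker f) : U ⊓ LinearMap.ker f = W := by
  have hlt : U ⊓ LinearMap.ker f < U := inf_le_left.lt_of_ne fun h => hfU (h ▸ inf_le_right)
  have := Submodule.finrank_lt_finrank_of_lt hlt
  exact (Submodule.eq_of_le_of_finrank_le (le_inf hWU hfW) (by omega)).symm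

theorem vectorSpan_le_ker_of_forall_eq {K V : Type*} [Ring K] [AddCommGroup V] [Module K V]
    {s : Set V} {f : V →ₗ[K] K} {c : K} (h : ∀ x ∈ s, f x = c) :
    vectorSpan K s ≤ LinearMap.ker f :=
  Submodule.span_le.2 <| by
    rintro _ ⟨a, ha, b, hb, rfl⟩
    simp [h a ha, h b hb]

theorem Submodule.exists_mem_forall_inner_eq {E : Type*} [NormedAddCommGroup E]
    [InnerProductSpace ℝ E] (V : Submodule ℝ E) [FiniteDimensional ℝ V] (f : E →ₗ[ℝ] ℝ) :
    ∃ η ∈ V, ∀ v ∈ V, ⟪η, v⟫_ℝ = f v := by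
  refine ⟨((InnerProductSpace.toDual ℝ V).symm (f.domRestrict V).toContinuousLinearMap : E),
    Submodule.coe_mem _, fun v hv => ?_⟩
  have := InnerProductSpace.toDual_symm_apply (x := (⟨v, hv⟩ : V))
    (y := (f.domRestrict V).toContinuousLinearMap)
  rwa [Submodule.coe_inner] at this

theorem exists_lt_of_eq_setOf {E : Type*} [AddCommGroup E] [Module ℝ E] {F P : Set E}
    {f : E →ₗ[ℝ] ℝ} {c : ℝ}
    (hfP : ∀ x ∈ P, f x ≤ c) (hF : F = {x ∈ P | f x = c})
    (hne : vectorSpan ℝ F ≠ vectorSpan ℝ P) : ∃ x ∈ P, f x < c := by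
  by_contra! h
  refine hne (congrArg _ ?_)
  rw [hF, sep_eq_self_iff_mem_true]
  exact fun x hx => le_antisymm (hfP x hx) (h x hx)

section Convex

variable {E : Type*} [NormedAddCommGroup E] [NormedSpace ℝ E]

theorem eventually_add_smul_mem_of_mem_intrinsicInterior {s : Set E} {p v : E}
    (hp : p ∈ intrinsicInterior ℝ s) (hv : v ∈ vectorSpan ℝ s) :
    ∀ᶠ r in 𝓝 (0 : ℝ), p + r • v ∈ s := by
  obtain ⟨q, hq, rfl⟩ := mem_intrinsicInterior.1 hp
  have hmem (r : ℝ) : r • v +ᵥ (q : E) ∈ affineSpan ℝ s :=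
    AffineSubspace.vadd_mem_of_mem_direction
      (by rw [direction_affineSpan]; exact Submodule.smul_mem _ r hv) q.2
  let γ : ℝ → affineSpan ℝ s := fun r => ⟨r • v +ᵥ (q : E), hmem r⟩
  have hγ : Tendsto γ (𝓝 0) (𝓝 q) := by
    have : Continuous γ := by fun_prop
    simpa [γ] using this.tendsto 0
  filter_upwards [hγ (mem_interior_iff_mem_nhds.1 hq)] with r hr
  simpa [γ, add_comm] using hr

theorem Convex.exists_pos_add_smul_sub_mem_inter {P Q : Set E} (hP : Convex ℝ P)
    (hQ : Convex ℝ Q) {p x y : E} (hp : p ∈ intrinsicInterior ℝ (P ∩ Q)) (hx : x ∈ P)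
    (hy : y ∈ Q) {r : ℝ} (hr : 0 < r) (hw : y - p - r • (x - p) ∈ vectorSpan ℝ (P ∩ Q)) :
    ∃ t > (0 : ℝ), p + t • (x - p) ∈ P ∩ Q := by
  set w := y - p - r • (x - p)
  have hpF : p ∈ P ∩ Q := intrinsicInterior_subset hp
  have hlim : Tendsto (fun s : ℝ => -(s / (1 - s))) (𝓝 0) (𝓝 0) := by
    have : ContinuousAt (fun s : ℝ => -(s / (1 - s))) 0 := by fun_prop (disch := norm_num)
    simpa using this.tendsto
  have hsmall : ∀ᶠ s : ℝ in 𝓝 0, s < 1 ∧ s * r < 1 :=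
    (eventually_lt_nhds one_pos).and
      ((continuous_mul_const r).continuousAt.eventually_lt continuousAt_const (by simp))
  have hnear : ∀ᶠ s : ℝ in 𝓝 0, (p + -(s / (1 - s)) • w ∈ P ∩ Q) ∧ s < 1 ∧ s * r < 1 :=
    (hlim.eventually (eventually_add_smul_mem_of_mem_intrinsicInterior hp hw)).and hsmall
  obtain ⟨s, ⟨hqF, hs1, hsr1⟩, hs0⟩ :=
    ((hnear.filter_mono nhdsWithin_le_nhds).and (self_mem_nhdsWithin (s := Ioi 0))).exists
  refine ⟨s * r, mul_pos hs0 hr, hP.add_smul_sub_mem hpF.1 hx ⟨(mul_pos hs0 hr).le, hsr1.le⟩, ?_⟩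
  -- `p + s r (x - p)` also lies on the segment from `q = p - s / (1 - s) • w ∈ F` to `y`
  have hζ : p + (s * r) • (x - p) =
      (p + -(s / (1 - s)) • w) + s • (y - (p + -(s / (1 - s)) • w)) := by
    have : 1 - s ≠ 0 := by linarith
    simp only [w]
    match_scalars <;> field_simp <;> ring
  rw [hζ]
  exact hQ.add_smul_sub_mem hqF.2 hy ⟨hs0.le, hs1.le⟩

theorem Convex.le_apply_of_inter_eq_setOf [FiniteDimensional ℝ E] {P Q : Set E}
    (hP : Convex ℝ P) (hQ : Convex ℝ Q) {f : E →ₗ[ℝ] ℝ} {c : ℝ}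
    (hF : P ∩ Q = {x ∈ P | f x = c}) (hQP : vectorSpan ℝ Q ≤ vectorSpan ℝ P)
    (hrank : finrank ℝ (vectorSpan ℝ (P ∩ Q)) + 1 = finrank ℝ (vectorSpan ℝ P))
    (hne : (P ∩ Q).Nonempty) {x₀ : E} (hx₀ : x₀ ∈ P) (hfx₀ : f x₀ < c) :
    ∀ y ∈ Q, c ≤ f y := by
  intro y hy
  by_contra! hfy
  have hfF : ∀ z ∈ P ∩ Q, f z = c := fun z hz => (hF ▸ hz).2
  obtain ⟨p, hp⟩ := hne.intrinsicInterior (hP.inter hQ)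
  have hpF : p ∈ P ∩ Q := intrinsicInterior_subset hp
  have hx₀p : x₀ - p ∈ vectorSpan ℝ P := vsub_mem_vectorSpan ℝ hx₀ hpF.1
  have hker : vectorSpan ℝ P ⊓ LinearMap.ker f = vectorSpan ℝ (P ∩ Q) := by
    refine Submodule.inf_ker_eq_of_finrank_succ (vectorSpan_mono ℝ inter_subset_left) hrank
      (vectorSpan_le_ker_of_forall_eq hfF) fun h => ?_
    have : f x₀ - f p = 0 := by simpa using h hx₀p
    linarith [hfF p hpF]
  set r := (f y - c) / (f x₀ - c)
  have hr : 0 < r := div_pos_of_neg_of_neg (by linarith) (by linarith)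
  have hw : y - p - r • (x₀ - p) ∈ vectorSpan ℝ (P ∩ Q) := by
    rw [← hker]
    refine Submodule.mem_inf.2 ⟨Submodule.sub_mem _ (hQP (vsub_mem_vectorSpan ℝ hy hpF.2))
      (Submodule.smul_mem _ r hx₀p), ?_⟩
    have : f x₀ - c ≠ 0 := by linarith
    simp only [LinearMap.mem_ker, map_sub, map_smul, smul_eq_mul, hfF p hpF, r]
    field_simp
    ring
  obtain ⟨t, ht, hmem⟩ := hP.exists_pos_add_smul_sub_mem_inter hQ hp hx₀ hy hr hw
  have := hfF _ hmem
  simp only [map_add, map_smul, map_sub, smul_eq_mul, hfF p hpF] at this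
  nlinarith

end Convex

theorem exists_normal_of_apply_le_of_le_apply {E : Type*} [NormedAddCommGroup E]
    [InnerProductSpace ℝ E] [FiniteDimensional ℝ E] {P Q : Set E} {f : E →ₗ[ℝ] ℝ} {c : ℝ}
    (hfP : ∀ x ∈ P, f x ≤ c) (hfQ : ∀ y ∈ Q, c ≤ f y) (hQP : vectorSpan ℝ Q ≤ vectorSpan ℝ P)
    (hne : (P ∩ Q).Nonempty) {x₀ : E} (hx₀ : x₀ ∈ P) (hfx₀ : f x₀ < c) :
    ∃ η : E, η ≠ 0 ∧ η ∈ vectorSpan ℝ P ∧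
      (∀ w ∈ vectorSpan ℝ (P ∩ Q), ⟪η, w⟫_ℝ = 0) ∧
      ∀ p ∈ P ∩ Q, (∀ x ∈ P, 0 ≤ ⟪η, x - p⟫_ℝ) ∧ (∀ y ∈ Q, ⟪η, y - p⟫_ℝ ≤ 0) := by
  have hfF : ∀ z ∈ P ∩ Q, f z = c := fun z hz => le_antisymm (hfP z hz.1) (hfQ z hz.2)
  obtain ⟨η, hηV, hη⟩ := (vectorSpan ℝ P).exists_mem_forall_inner_eq f
  have hside : ∀ p ∈ P ∩ Q, ∀ x, x - p ∈ vectorSpan ℝ P → ⟪-η, x - p⟫_ℝ = c - f x := by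
    intro p hp x hx
    rw [inner_neg_left, hη _ hx, map_sub, hfF p hp]
    ring
  obtain ⟨p₀, hp₀⟩ := hne
  refine ⟨-η, fun h => ?_, neg_mem hηV, fun w hw => ?_,
    fun p hp => ⟨fun x hx => ?_, fun y hy => ?_⟩⟩
  · have := hside p₀ hp₀ x₀ (vsub_mem_vectorSpan ℝ hx₀ hp₀.1)
    rw [h, inner_zero_left] at this
    linarith
  · rw [inner_neg_left, hη w (vectorSpan_mono ℝ inter_subset_left hw),
      vectorSpan_le_ker_of_forall_eq hfF hw, neg_zero]
  · rw [hside p hp x (vsub_mem_vectorSpan ℝ hx hp.1)]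
    linarith [hfP x hx]
  · rw [hside p hp y (hQP (vsub_mem_vectorSpan ℝ hy hp.2))]
    linarith [hfQ y hy]

theorem IsPolytope.convex {n : ℕ} {P : Set (Euc n)} (hP : IsPolytope P) : Convex ℝ P := by
  obtain ⟨s, rfl⟩ := hP
  exact convex_convexHull ℝ _

theorem statement3_general {n k : ℕ} (hk : 1 ≤ k)
    (P Q : Set (Euc n)) (hP : IsPolytope P) (hQ : IsPolytope Q)
    (hdP : polyDim P = k)
    (hA : affineSpan ℝ P = affineSpan ℝ Q)
    (hFP : IsFaceOf (P ∩ Q) P)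
    (hdF : polyDim (P ∩ Q) = k - 1) :
    ∃ η : Euc n, η ≠ 0 ∧ η ∈ vectorSpan ℝ P ∧
      (∀ w ∈ vectorSpan ℝ (P ∩ Q), ⟪η, w⟫_ℝ = 0) ∧
      ∀ p ∈ P ∩ Q, (∀ x ∈ P, 0 ≤ ⟪η, x - p⟫_ℝ) ∧ (∀ y ∈ Q, ⟪η, y - p⟫_ℝ ≤ 0) := by
  obtain ⟨f, c, hfP, hF⟩ := hFP
  have hQP : vectorSpan ℝ Q = vectorSpan ℝ P := by
    rw [← direction_affineSpan, ← direction_affineSpan, hA]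
  have hrank : finrank ℝ (vectorSpan ℝ (P ∩ Q)) + 1 = finrank ℝ (vectorSpan ℝ P) := by
    unfold polyDim at hdP hdF
    omega
  rcases (P ∩ Q).eq_empty_or_nonempty with hempty | hne
  · obtain ⟨η, hηV, hη0⟩ := Submodule.exists_mem_ne_zero_of_ne_bot (p := vectorSpan ℝ P)
      fun h => by rw [polyDim, h, finrank_bot] at hdP; omega
    exact ⟨η, hη0, hηV, by simp [hempty], by simp [hempty]⟩
  obtain ⟨x₀, hx₀, hfx₀⟩ := exists_lt_of_eq_setOf hfP hF fun h => by rw [h] at hrank; omega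
  have hfQ := hP.convex.le_apply_of_inter_eq_setOf hQ.convex hF hQP.le hrank hne hx₀ hfx₀
  exact exists_normal_of_apply_le_of_le_apply hfP hfQ hQP.le hne hx₀ hfx₀

theorem statement3 {n k : ℕ} (hk : 1 ≤ k)
    (P Q : Set (Euc n)) (hP : IsPolytope P) (hQ : IsPolytope Q)
    (hdP : polyDim P = k) (hdQ : polyDim Q = k)
    (hA : affineSpan ℝ P = affineSpan ℝ Q)
    (hFP : IsFaceOf (P ∩ Q) P) (hFQ : IsFaceOf (P ∩ Q) Q)
    (hdF : polyDim (P ∩ Q) = k - 1) :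
    ∃ η : Euc n, η ≠ 0 ∧ η ∈ vectorSpan ℝ P ∧
      (∀ w ∈ vectorSpan ℝ (P ∩ Q), ⟪η, w⟫_ℝ = 0) ∧
      ∀ p ∈ P ∩ Q, (∀ x ∈ P, 0 ≤ ⟪η, x - p⟫_ℝ) ∧ (∀ y ∈ Q, ⟪η, y - p⟫_ℝ ≤ 0) :=
  statement3_general hk P Q hP hQ hdP hA hFP hdF

end
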